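/- If E is a strictly convex normed space and μ is a Borel probability measure on E that is not concentrated on any affine line (μ(L) < 1 for every affine line L), then the objective function φ_ℓ is strictly convex; in particular μ has at most one geometric ℓ-quantile. -/

import Mathlib

/-!
For `x` off the line through `a ≠ b`, the vectors `a - x` and `b - x` do not lie on a common ray,
so strict convexity of the norm makes `α ↦ ‖α - x‖` strictly convex along the segment `[a, b]`
at `x`. Since `μ` gives positive mass to the complement of that line, integrating keeps the
inequality strict; subtracting the linear form `ℓ` does not affect strict convexity, and a strictly
convex function has at most one minimiser.
-/

open MeasureTheory Set

section Line

variable {E : Type*} [AddCommGroup E] [Module ℝ E]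

theorem mem_range_add_smul_sub_of_sameRay {a b x : E} (hab : a ≠ b)
    (h : SameRay ℝ (a - x) (b - x)) : x ∈ range fun τ : ℝ => a + τ • (b - a) := by
  by_cases hxa : a - x = 0
  · exact ⟨0, by simp [sub_eq_zero.mp hxa]⟩
  obtain ⟨r, -, hr⟩ := h.exists_nonneg_left hxa
  have hr1 : 1 - r ≠ 0 := by
    rintro hr1
    rw [← sub_eq_zero.mp hr1, one_smul, sub_left_inj] at hr
    exact hab hr
  refine ⟨(1 - r)⁻¹, smul_right_injective E hr1 ?_⟩
  simp only [smul_add, smul_smul, mul_inv_cancel₀ hr1, one_smul]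
  linear_combination (norm := module) -hr

theorem combo_sub_eq (a b x : E) {t s : ℝ} (hts : t + s = 1) :
    t • a + s • b - x = t • (a - x) + s • (b - x) := by
  rw [smul_sub, smul_sub, ← sub_eq_zero]
  linear_combination (norm := module) hts • x

end Line

section StrictConvex

variable {E : Type*} [NormedAddCommGroup E] [NormedSpace ℝ E]

theorem norm_combo_sub_le (a b x : E) {t s : ℝ} (ht : 0 ≤ t) (hs : 0 ≤ s) (hts : t + s = 1) :
    ‖t • a + s • b - x‖ ≤ t * ‖a - x‖ + s * ‖b - x‖ := by
  rw [combo_sub_eq a b x hts]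
  refine (norm_add_le _ _).trans_eq ?_
  rw [norm_smul_of_nonneg ht, norm_smul_of_nonneg hs]

theorem norm_combo_sub_lt [StrictConvexSpace ℝ E] {a b x : E} (hab : a ≠ b)
    (hx : x ∉ range fun τ : ℝ => a + τ • (b - a)) {t s : ℝ} (ht : 0 < t) (hs : 0 < s)
    (hts : t + s = 1) :
    ‖t • a + s • b - x‖ < t * ‖a - x‖ + s * ‖b - x‖ := by
  have hray : ¬ SameRay ℝ (t • (a - x)) (s • (b - x)) := fun h =>
    hx <| mem_range_add_smul_sub_of_sameRay hab <|
      by simpa only [inv_smul_smul₀ ht.ne', inv_smul_smul₀ hs.ne'] using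
        (h.pos_smul_left (inv_pos.mpr ht)).pos_smul_right (inv_pos.mpr hs)
  rw [combo_sub_eq a b x hts]
  refine (not_sameRay_iff_norm_add_lt.mp hray).trans_eq ?_
  rw [norm_smul_of_nonneg ht.le, norm_smul_of_nonneg hs.le]

end StrictConvex

section Integral

variable {α : Type*} [MeasurableSpace α] {μ : Measure α}

theorem integral_lt_integral_of_le_of_lt_on_compl {f g : α → ℝ} (hf : Integrable f μ)
    (hg : Integrable g μ) (hle : ∀ x, f x ≤ g x) {S : Set α} (hS : μ S < μ univ)
    (hlt : ∀ x ∉ S, f x < g x) : ∫ x, f x ∂μ < ∫ x, g x ∂μ := by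
  have hSc : μ Sᶜ ≠ 0 := fun h0 =>
    hS.not_ge <| (measure_univ_le_add_compl S).trans_eq (by rw [h0, add_zero])
  rw [← sub_pos, ← integral_sub hg hf,
    integral_pos_iff_support_of_nonneg (fun x => sub_nonneg.mpr (hle x)) (hg.sub hf)]
  exact pos_iff_ne_zero.mpr fun h0 =>
    hSc <| measure_mono_null (fun x hx => (sub_pos.mpr (hlt x hx)).ne') h0

end Integral

section Quantile

variable {E : Type*} [NormedAddCommGroup E] [MeasurableSpace E] [OpensMeasurableSpace E]
  (μ : Measure E)

theorem integrable_norm_sub_sub_norm [IsFiniteMeasure μ] (a : E) :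
    Integrable (fun x => ‖a - x‖ - ‖x‖) μ :=
  .of_bound (by fun_prop) ‖a‖ <| .of_forall fun x => by
    simpa [abs_sub_comm] using abs_norm_sub_norm_le (a - x) (-x)

theorem strictConvexOn_integral_norm_sub_sub_norm [NormedSpace ℝ E] [StrictConvexSpace ℝ E]
    [IsFiniteMeasure μ] (hμ : ∀ u v : E, v ≠ 0 → μ (range fun t : ℝ => u + t • v) < μ univ) :
    StrictConvexOn ℝ univ fun a : E => ∫ x, (‖a - x‖ - ‖x‖) ∂μ := by
  refine ⟨convex_univ, fun a _ b _ hab t s ht hs hts => ?_⟩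
  have ha := (integrable_norm_sub_sub_norm μ a).const_mul t
  have hb := (integrable_norm_sub_sub_norm μ b).const_mul s
  have hlt : ∫ x, (‖t • a + s • b - x‖ - ‖x‖) ∂μ <
      ∫ x, (t * (‖a - x‖ - ‖x‖) + s * (‖b - x‖ - ‖x‖)) ∂μ :=
    integral_lt_integral_of_le_of_lt_on_compl (integrable_norm_sub_sub_norm μ _) (ha.add hb)
      (fun x => by linear_combination norm_combo_sub_le a b x ht.le hs.le hts + ‖x‖ * hts)
      (hμ a (b - a) (sub_ne_zero.mpr hab.symm))
      (fun x hx => by linear_combination norm_combo_sub_lt hab hx ht hs hts + ‖x‖ * hts)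
  rwa [integral_add ha hb, integral_const_mul, integral_const_mul] at hlt

end Quantile

theorem stmt7_general {E : Type*} [NormedAddCommGroup E] [NormedSpace ℝ E] [StrictConvexSpace ℝ E]
    [MeasurableSpace E] [BorelSpace E]
    (μ : Measure E) [IsProbabilityMeasure μ]
    (hμ : ∀ u v : E, v ≠ 0 → μ (Set.range fun t : ℝ => u + t • v) < 1)
    (ℓ : E →L[ℝ] ℝ) :
    StrictConvexOn ℝ Set.univ (fun α : E => (∫ x, (‖α - x‖ - ‖x‖) ∂μ) - ℓ α) ∧
    Set.Subsingleton
      {α : E | IsMinOn (fun a : E => (∫ x, (‖a - x‖ - ‖x‖) ∂μ) - ℓ a) Set.univ α} := by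
  have hconv : StrictConvexOn ℝ univ (fun α : E => (∫ x, (‖α - x‖ - ‖x‖) ∂μ) - ℓ α) :=
    (strictConvexOn_integral_norm_sub_sub_norm μ <| by simpa only [measure_univ] using hμ)
      |>.sub_concaveOn ((ℓ : E →ₗ[ℝ] ℝ).concaveOn convex_univ)
  exact ⟨hconv, fun a ha b hb => hconv.eq_of_isMinOn ha hb trivial trivial⟩

/-- If `E` is strictly convex and `μ` is not concentrated on any affine line, then `φ_ℓ` is
strictly convex; in particular `μ` has at most one geometric `ℓ`-quantile. -/
theorem stmt7 {E : Type*} [NormedAddCommGroup E] [NormedSpace ℝ E] [StrictConvexSpace ℝ E]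
    [MeasurableSpace E] [BorelSpace E]
    (μ : Measure E) [IsProbabilityMeasure μ]
    (hμ : ∀ u v : E, v ≠ 0 → μ (Set.range fun t : ℝ => u + t • v) < 1)
    (ℓ : E →L[ℝ] ℝ) (hℓ : ‖ℓ‖ < 1) :
    StrictConvexOn ℝ Set.univ (fun α : E => (∫ x, (‖α - x‖ - ‖x‖) ∂μ) - ℓ α) ∧
    Set.Subsingleton
      {α : E | IsMinOn (fun a : E => (∫ x, (‖a - x‖ - ‖x‖) ∂μ) - ℓ a) Set.univ α} :=
  stmt7_general μ hμ ℓ
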